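/- Let hₙ (n ≥ 3) be the affine orthogonal Lie algebra and define ρ : hₙ ∧ hₙ → hₙ by ρ(∂/∂xⁱ ∧ ∂/∂xʲ) = α_{ij} and ρ(g₁ ∧ g₂) = 0 if g₁ or g₂ lies in the span of the α_{ij}. Then ρ is a Chevalley-Eilenberg 2-cocycle of hₙ with adjoint coefficients: for all X, Y, Z ∈ hₙ, -[X, ρ(Y∧Z)] + [Y, ρ(X∧Z)] - [Z, ρ(X∧Y)] + ρ([X,Y]∧Z) - ρ([X,Z]∧Y) - ρ(X∧[Y,Z]) = 0 (with the appropriate sign convention δρ = 0). -/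

import Mathlib

/-!  STATEMENT 14: The "area" cochain `ρ : hₙ ∧ hₙ → hₙ` with `ρ(∂/∂xⁱ ∧ ∂/∂xʲ) = α_{ij}`
and `ρ(g₁ ∧ g₂) = 0` whenever `g₁` or `g₂` lies in the span of the `α_{ij}`, is a
Chevalley-Eilenberg 2-cocycle of `hₙ` with adjoint coefficients.  On vector fields it is
realized by the bilinear antisymmetric formula
`ρ(X,Y)(p) = ⟨p, X(0)⟩ Y(0) - ⟨p, Y(0)⟩ X(0)`. -/

/-- Vector fields on ℝⁿ, modelled as maps assigning to each point the components of the
field at that point. -/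
abbrev Vec (n : ℕ) := (Fin n → ℝ) → (Fin n → ℝ)

/-- The Lie bracket of vector fields: `[X,Y] = X(Y) - Y(X)` (directional derivatives of
the coefficient functions). -/
noncomputable def br {n : ℕ} (X Y : Vec n) : Vec n :=
  fun p => fderiv ℝ Y p (X p) - fderiv ℝ X p (Y p)

/-- The rotational vector field `α_{ij} = xᵢ ∂/∂xⱼ - xⱼ ∂/∂xⁱ`. -/
noncomputable def alphaVF {n : ℕ} (i j : Fin n) : Vec n :=
  fun p => p i • (Pi.single j (1 : ℝ) : Fin n → ℝ) - p j • (Pi.single i (1 : ℝ) : Fin n → ℝ)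

/-- The translation vector field `∂/∂xⁱ`. -/
def delVF {n : ℕ} (i : Fin n) : Vec n := fun _ => (Pi.single i (1 : ℝ) : Fin n → ℝ)

/-- `hₙ`, the span of the `α_{ij}` (`i < j`) and the `∂/∂xⁱ`:
the affine orthogonal Lie algebra realized by vector fields on ℝⁿ. -/
noncomputable def hAff (n : ℕ) : Submodule ℝ (Vec n) :=
  Submodule.span ℝ
    ({X | ∃ i j : Fin n, i < j ∧ X = alphaVF i j} ∪ {X | ∃ i : Fin n, X = delVF i})

/-- `Jₙ`, the span of the translations `∂/∂xⁱ`. -/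
noncomputable def JAff (n : ℕ) : Submodule ℝ (Vec n) :=
  Submodule.span ℝ {X | ∃ i : Fin n, X = delVF i}

/-- The copy of `so(n)` inside `hₙ`: the span of the `α_{ij}`, `i < j`. -/
noncomputable def soAff (n : ℕ) : Submodule ℝ (Vec n) :=
  Submodule.span ℝ {X | ∃ i j : Fin n, i < j ∧ X = alphaVF i j}

/-- The area cochain `ρ`: bilinear, antisymmetric, `ρ(∂ᵢ, ∂ⱼ) = α_{ij}`, and zero as soon
as one argument lies in the span of the `α_{kl}` (whose value at the origin vanishes). -/
def rho {n : ℕ} (X Y : Vec n) : Vec n :=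
  fun p => (∑ t, p t * X 0 t) • Y 0 - (∑ t, p t * Y 0 t) • X 0

section Aux
variable {n : ℕ}

def ip (a b : Fin n → ℝ) : ℝ := ∑ t, a t * b t

lemma ip_def (a b : Fin n → ℝ) : (∑ t, a t * b t) = ip a b := rfl

lemma ip_add_left (a b c : Fin n → ℝ) : ip (a + b) c = ip a c + ip b c := by
  simp [ip, add_mul, Finset.sum_add_distrib]

lemma ip_sub_left (a b c : Fin n → ℝ) : ip (a - b) c = ip a c - ip b c := by
  simp [ip, sub_mul, Finset.sum_sub_distrib]

lemma ip_smul_left (r : ℝ) (a b : Fin n → ℝ) : ip (r • a) b = r * ip a b := by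
  simp [ip, Finset.mul_sum, mul_assoc]

lemma ip_add_right (a b c : Fin n → ℝ) : ip a (b + c) = ip a b + ip a c := by
  simp [ip, mul_add, Finset.sum_add_distrib]

lemma ip_sub_right (a b c : Fin n → ℝ) : ip a (b - c) = ip a b - ip a c := by
  simp [ip, mul_sub, Finset.sum_sub_distrib]

lemma ip_smul_right (r : ℝ) (a b : Fin n → ℝ) : ip a (r • b) = r * ip a b := by
  simp [ip, Finset.mul_sum, mul_left_comm]

lemma ip_sub_right' (a b c : Fin n → ℝ) : ip a (fun t => b t - c t) = ip a b - ip a c :=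
  ip_sub_right a b c

lemma ip_comm (a b : Fin n → ℝ) : ip a b = ip b a := by
  simp [ip, mul_comm]

lemma ip_single (p : Fin n → ℝ) (i : Fin n) : ip p (Pi.single i 1) = p i := by
  simp [ip, Pi.single_apply, mul_ite]

noncomputable def Rlin (c d : Fin n → ℝ) : (Fin n → ℝ) →ₗ[ℝ] (Fin n → ℝ) where
  toFun p := ip p c • d - ip p d • c
  map_add' p q := by simp only [ip_add_left, add_smul]; abel
  map_smul' r p := by simp only [ip_smul_left, mul_smul, RingHom.id_apply, smul_sub]

def Skew (L : (Fin n → ℝ) →ₗ[ℝ] (Fin n → ℝ)) : Prop :=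
  ∀ p q, ip (L p) q = -(ip p (L q))

lemma skew_Rlin (c d : Fin n → ℝ) : Skew (Rlin c d) := by
  intro p q
  simp only [Rlin, LinearMap.coe_mk, AddHom.coe_mk, ip_sub_left, ip_sub_right,
    ip_smul_left, ip_smul_right]
  rw [ip_comm d q, ip_comm c q]
  ring

lemma fderiv_affine (L : (Fin n → ℝ) →ₗ[ℝ] (Fin n → ℝ)) (c p : Fin n → ℝ) :
    fderiv ℝ (fun q => L q + c) p = LinearMap.toContinuousLinearMap L := by
  have h := ((LinearMap.toContinuousLinearMap L).hasFDerivAt (x := p)).add_const c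
  simpa using h.fderiv

lemma br_affine (L M : (Fin n → ℝ) →ₗ[ℝ] (Fin n → ℝ)) (c d : Fin n → ℝ) :
    br (fun p => L p + c) (fun p => M p + d) = fun p => M (L p + c) - L (M p + d) := by
  funext p
  simp only [br, fderiv_affine]
  simp

lemma hAff_rep {X : Vec n} (hX : X ∈ Submodule.span ℝ
    ({X | ∃ i j : Fin n, i < j ∧ X = alphaVF i j} ∪ {X | ∃ i : Fin n, X = delVF i})) :
    ∃ (L : (Fin n → ℝ) →ₗ[ℝ] (Fin n → ℝ)) (c : Fin n → ℝ),
      Skew L ∧ X = fun p => L p + c := by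
  induction hX using Submodule.span_induction with
  | mem x hx =>
      rcases hx with ⟨i, j, _, rfl⟩ | ⟨i, rfl⟩
      · refine ⟨Rlin (Pi.single i 1) (Pi.single j 1), 0, skew_Rlin _ _, ?_⟩
        funext p
        simp [alphaVF, Rlin, ip_single]
      · exact ⟨0, Pi.single i 1, fun p q => by simp [Skew, ip], by funext p; simp [delVF]⟩
  | zero => exact ⟨0, 0, fun p q => by simp [Skew, ip], by funext p; simp⟩
  | add x y _ _ hx hy =>
      obtain ⟨L, c, hL, rfl⟩ := hx
      obtain ⟨M, d, hM, rfl⟩ := hy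
      refine ⟨L + M, c + d, fun p q => ?_, ?_⟩
      · simp only [LinearMap.add_apply, ip_add_left, ip_add_right, hL p q, hM p q]; ring
      · funext p; simp [Pi.add_apply]; abel
  | smul r x _ hx =>
      obtain ⟨L, c, hL, rfl⟩ := hx
      refine ⟨r • L, r • c, fun p q => ?_, ?_⟩
      · simp only [LinearMap.smul_apply, ip_smul_left, ip_smul_right, hL p q]; ring
      · funext p; simp [smul_add]

end Aux

section Key
variable {n : ℕ}

lemma key (L M N : (Fin n → ℝ) →ₗ[ℝ] (Fin n → ℝ)) (hL : Skew L) (hM : Skew M) (hN : Skew N)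
    (c d e : Fin n → ℝ) :
    -br (fun p => L p + c) (rho (fun p => M p + d) (fun p => N p + e))
      + br (fun p => M p + d) (rho (fun p => L p + c) (fun p => N p + e))
      - br (fun p => N p + e) (rho (fun p => L p + c) (fun p => M p + d))
      + rho (br (fun p => L p + c) (fun p => M p + d)) (fun p => N p + e)
      - rho (br (fun p => L p + c) (fun p => N p + e)) (fun p => M p + d)
      - rho (fun p => L p + c) (br (fun p => M p + d) (fun p => N p + e)) = 0 := by
  have rde : rho (fun p => M p + d) (fun p => N p + e) = fun p => Rlin d e p + 0 := by
    funext p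
    simp [rho, Rlin, ip_def]
  have rce : rho (fun p => L p + c) (fun p => N p + e) = fun p => Rlin c e p + 0 := by
    funext p
    simp [rho, Rlin, ip_def]
  have rcd : rho (fun p => L p + c) (fun p => M p + d) = fun p => Rlin c d p + 0 := by
    funext p
    simp [rho, Rlin, ip_def]
  rw [rde, rce, rcd, br_affine L M c d, br_affine L N c e, br_affine M N d e,
    br_affine L (Rlin d e) c 0, br_affine M (Rlin c e) d 0, br_affine N (Rlin c d) e 0]
  funext p
  have h1 := hL p d
  have h2 := hL p e
  have h3 := hM p c
  have h4 := hM p e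
  have h5 := hN p c
  have h6 := hN p d
  simp only [Pi.add_apply, Pi.sub_apply, Pi.neg_apply, Pi.zero_apply, rho,
    map_zero, zero_add, add_zero, Rlin, LinearMap.coe_mk, AddHom.coe_mk,
    map_add, map_sub, map_smul, ip_def, ip_add_left, ip_sub_left, ip_smul_left,
    ip_add_right, ip_sub_right, ip_sub_right', ip_smul_right]
  rw [show ip (L p) d = -(ip p (L d)) from hL p d,
      show ip (L p) e = -(ip p (L e)) from hL p e,
      show ip (M p) c = -(ip p (M c)) from hM p c,
      show ip (M p) e = -(ip p (M e)) from hM p e,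
      show ip (N p) c = -(ip p (N c)) from hN p c,
      show ip (N p) d = -(ip p (N d)) from hN p d,
      ip_comm d c, ip_comm e c, ip_comm e d]
  module

end Key

theorem area_class_is_cocycle (n : ℕ) (hn : 3 ≤ n) :
    ∀ X ∈ hAff n, ∀ Y ∈ hAff n, ∀ Z ∈ hAff n,
      -br X (rho Y Z) + br Y (rho X Z) - br Z (rho X Y)
        + rho (br X Y) Z - rho (br X Z) Y - rho X (br Y Z) = 0 := by
  intro X hX Y hY Z hZ
  rw [hAff] at hX hY hZ
  obtain ⟨L, c, hL, rfl⟩ := hAff_rep hX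
  obtain ⟨M, d, hM, rfl⟩ := hAff_rep hY
  obtain ⟨N, e, hN, rfl⟩ := hAff_rep hZ
  exact key L M N hL hM hN c d e
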